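/- Let z be a standard circularly symmetric complex Gaussian random variable with density (1/π)e^{−|z|²} on ℂ. Then for every r > 0, E[ |z| · min(|z|, r) ] = 1 − e^{−r²} + (r√π/2)·erfc(r), where erfc(r) = (2/√π)∫_r^∞ e^{−t²} dt. -/

import Mathlib

/-!
In polar coordinates the expectation is `2 ∫₀^∞ y² min(y, r) e^{-y²} dy`. On `(0, r]` the
integrand `y³ e^{-y²}` has the primitive `-(1 + y²) e^{-y²} / 2`. On `(r, ∞)` it is
`r y² e^{-y²}`, and integrating by parts against `d(-e^{-y²} / 2)` gives `r/2 · e^{-r²}` plus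
half the Gaussian tail `∫_r^∞ e^{-t²} dt`, which is the `erfc` term.
-/

open MeasureTheory Set Real Filter Topology

theorem Complex.integral_fun_norm {F : Type*} [NormedAddCommGroup F] [NormedSpace ℝ F]
    (f : ℝ → F) : ∫ z : ℂ, f ‖z‖ = (2 * π) • ∫ y in Ioi (0 : ℝ), y • f y := by
  rw [integral_fun_norm_addHaar volume f, Complex.finrank_real_complex, measureReal_def,
    Complex.volume_ball, ← Nat.cast_smul_eq_nsmul ℝ, smul_smul]
  simp

theorem tendsto_mul_exp_neg_sq_atTop :
    Tendsto (fun y : ℝ => y * exp (-y ^ 2)) atTop (𝓝 0) := by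
  refine ((tendsto_rpow_abs_mul_exp_neg_mul_sq_cocompact one_pos 1).mono_left
    atTop_le_cocompact).congr' ?_
  filter_upwards [eventually_ge_atTop 0] with y hy
  simp [abs_of_nonneg hy]

theorem hasDerivAt_exp_neg_sq (y : ℝ) :
    HasDerivAt (fun y => exp (-y ^ 2)) (-2 * y * exp (-y ^ 2)) y :=
  (hasDerivAt_pow 2 y).fun_neg.exp.congr_deriv (by ring)

theorem integrable_exp_neg_sq : Integrable fun y : ℝ => exp (-y ^ 2) := by
  simpa using integrable_exp_neg_mul_sq one_pos

theorem integrable_sq_mul_exp_neg_sq : Integrable fun y : ℝ => y ^ 2 * exp (-y ^ 2) := by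
  simpa using integrable_rpow_mul_exp_neg_mul_sq one_pos (by norm_num : (-1 : ℝ) < 2)

theorem integral_cube_mul_exp_neg_sq (r : ℝ) :
    ∫ y in (0)..r, y ^ 3 * exp (-y ^ 2) = 1 / 2 - (1 + r ^ 2) / 2 * exp (-r ^ 2) := by
  have hF (y : ℝ) : HasDerivAt (fun y => -((1 + y ^ 2) / 2) * exp (-y ^ 2))
      (y ^ 3 * exp (-y ^ 2)) y :=
    ((((hasDerivAt_pow 2 y).const_add 1).div_const 2).fun_neg.fun_mul
      (hasDerivAt_exp_neg_sq y)).congr_deriv (by push_cast; ring)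
  rw [intervalIntegral.integral_eq_sub_of_hasDerivAt (fun y _ => hF y)
    (by apply Continuous.intervalIntegrable; fun_prop)]
  simp only [ne_eq, OfNat.ofNat_ne_zero, not_false_eq_true, zero_pow, add_zero, neg_zero,
    exp_zero, mul_one]
  ring

theorem integral_Ioi_sq_mul_exp_neg_sq (r : ℝ) :
    ∫ y in Ioi r, y ^ 2 * exp (-y ^ 2) =
      r / 2 * exp (-r ^ 2) + 1 / 2 * ∫ t in Ioi r, exp (-t ^ 2) := by
  have hF (y : ℝ) : HasDerivAt (fun y => -(y / 2) * exp (-y ^ 2))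
      (y ^ 2 * exp (-y ^ 2) - 1 / 2 * exp (-y ^ 2)) y :=
    (((hasDerivAt_id y).div_const 2).fun_neg.fun_mul (hasDerivAt_exp_neg_sq y)).congr_deriv
      (by simp only [id]; ring)
  have hlim : Tendsto (fun y => -(y / 2) * exp (-y ^ 2)) atTop (𝓝 0) := by
    convert (tendsto_mul_exp_neg_sq_atTop.div_const 2).neg using 1
    · ext y; ring
    · simp
  have hFTC := integral_Ioi_of_hasDerivAt_of_tendsto' (a := r) (fun y _ => hF y)
    (integrable_sq_mul_exp_neg_sq.sub (integrable_exp_neg_sq.const_mul _)).integrableOn hlim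
  rw [integral_sub integrable_sq_mul_exp_neg_sq.integrableOn
    (integrable_exp_neg_sq.const_mul _).integrableOn, integral_const_mul] at hFTC
  linarith

theorem integral_Ioi_sq_mul_min_mul_exp_neg_sq {r : ℝ} (hr : 0 ≤ r) :
    ∫ y in Ioi 0, y ^ 2 * min y r * exp (-y ^ 2) =
      (∫ y in (0)..r, y ^ 3 * exp (-y ^ 2)) + r * ∫ y in Ioi r, y ^ 2 * exp (-y ^ 2) := by
  have hle : EqOn (fun y => y ^ 2 * min y r * exp (-y ^ 2)) (fun y => y ^ 3 * exp (-y ^ 2))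
      (Ioc 0 r) := fun y hy => by simp only [min_eq_left hy.2]; ring
  have hgt : EqOn (fun y => y ^ 2 * min y r * exp (-y ^ 2))
      (fun y => r * (y ^ 2 * exp (-y ^ 2))) (Ioi r) :=
    fun y hy => by simp only [min_eq_right hy.out.le]; ring
  rw [← Ioc_union_Ioi_eq_Ioi hr, setIntegral_union (Ioc_disjoint_Ioi le_rfl) measurableSet_Ioi,
    setIntegral_congr_fun measurableSet_Ioc hle, setIntegral_congr_fun measurableSet_Ioi hgt,
    intervalIntegral.integral_of_le hr, integral_const_mul]
  · exact (Continuous.integrableOn_Icc (by fun_prop)).mono_set Ioc_subset_Icc_self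
  · exact (integrable_sq_mul_exp_neg_sq.const_mul r).integrableOn.congr_fun hgt.symm
      measurableSet_Ioi

theorem stmt_7 (r : ℝ) (hr : 0 < r) :
    ∫ z : ℂ, (‖z‖ * min (‖z‖) r) *
        ((1 / Real.pi) * Real.exp (-(‖z‖) ^ 2))
      = 1 - Real.exp (-r ^ 2) +
          (r * Real.sqrt Real.pi / 2) *
            ((2 / Real.sqrt Real.pi) * ∫ t in Set.Ioi r, Real.exp (-t ^ 2)) := by
  calc _ = (2 * π) • ∫ y in Ioi (0 : ℝ), y • (y * min y r * (1 / π * exp (-y ^ 2))) :=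
        Complex.integral_fun_norm fun y => y * min y r * (1 / π * exp (-y ^ 2))
    _ = 2 * ∫ y in Ioi 0, y ^ 2 * min y r * exp (-y ^ 2) := by
        rw [smul_eq_mul, ← integral_const_mul, ← integral_const_mul]
        congr 1 with y
        rw [smul_eq_mul]
        field_simp
    _ = _ := by
        rw [integral_Ioi_sq_mul_min_mul_exp_neg_sq hr.le, integral_cube_mul_exp_neg_sq,
          integral_Ioi_sq_mul_exp_neg_sq]
        field_simp
        ring
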